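/- arXiv:1511.08946 — 2 statements merged into one kernel-verified Lean document; each statement's English description precedes it below -/
import Mathlib

section
/- Under hypotheses (H1)–(H3) with σ ∈ (α+KL, β−KL), the map 𝒯(φ, x₀, t₀)(t) = Λ_A(t,t₀)x₀ + ∫_{t₀}^{t} Λ_A(t,s) F(φ(s)) ds − ∫_{t}^{∞} Λ_B(t,s) G(φ(s)) ds is a contraction on the space F_{σ,t₀} = {φ ∈ C([t₀,∞), X×Y) : sup_{t≥t₀} e^{−σ(t−t₀)}‖φ(t)‖ < ∞} equipped with the norm ‖φ‖_σ = sup_{t≥t₀} e^{−σ(t−t₀)}‖φ(t)‖, with contraction constant at most κ = max{KL/(σ−α), KL/(β−σ)} < 1. -/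
/-!
Both components of the difference `𝒯φ₁ - 𝒯φ₂` are integrals of `Λ(t,s)(H(s,φ₁ s) - H(s,φ₂ s))`.
Bounding `‖Λ(t,s)‖` by the dichotomy estimate and `‖φ₁ s - φ₂ s‖` by `‖φ₁ - φ₂‖_σ e^{σ(s-t₀)}`,
the integrand is `K L ‖φ₁ - φ₂‖_σ e^{σ(t-t₀)}` times `e^{(σ-α)(s-t)}` on `[t₀, t]`, resp. times
`e^{(σ-β)(s-t)}` on `[t, ∞)`. These exponentials integrate to at most `1/(σ-α)` and `1/(β-σ)`,
which gives the constants `KL/(σ-α)` and `KL/(β-σ)`; the window for `σ` makes both less than one.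
The tail integrals of `𝒯φᵢ` themselves converge because `G(s,0) = 0` turns the Lipschitz bound
into linear growth.
-/

open MeasureTheory Set Real

theorem max_div_lt_one_of_lt {k α β σ : ℝ} (hk : 0 ≤ k) (hα : α + k < σ) (hβ : σ < β - k) :
    max (k / (σ - α)) (k / (β - σ)) < 1 :=
  max_lt ((div_lt_one (by linarith)).2 (by linarith)) ((div_lt_one (by linarith)).2 (by linarith))

theorem exp_neg_mul_mul_le_iff {σ u r C : ℝ} :
    exp (-σ * u) * r ≤ C ↔ r ≤ C * exp (σ * u) := by
  rw [neg_mul, exp_neg, inv_mul_le_iff₀ (exp_pos _), mul_comm]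

theorem exp_mul_sub_mul_exp_mul_sub (a σ t s t₀ : ℝ) :
    exp (a * (t - s)) * exp (σ * (s - t₀)) = exp (σ * (t - t₀)) * exp ((σ - a) * (s - t)) := by
  rw [← exp_add, ← exp_add]
  ring_nf

section ExpIntegrals

theorem intervalIntegral_exp_mul_sub_le {c : ℝ} (hc : 0 < c) (a b : ℝ) :
    ∫ s in a..b, exp (c * (s - b)) ≤ 1 / c := by
  rw [intervalIntegral.integral_comp_sub_right (fun x => exp (c * x)),
    intervalIntegral.integral_comp_mul_left (fun x => exp x) hc.ne', integral_exp]
  have : 0 ≤ exp (c * (a - b)) / c := by positivity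
  simp only [sub_self, mul_zero, exp_zero, smul_eq_mul]
  linarith [show c⁻¹ * (1 - exp (c * (a - b))) = 1 / c - exp (c * (a - b)) / c by ring]

theorem integrableOn_exp_mul_sub_Ici {c : ℝ} (hc : c < 0) (t : ℝ) :
    IntegrableOn (fun s => exp (c * (s - t))) (Ici t) := by
  simp_rw [mul_sub, exp_sub]
  exact (integrableOn_Ici_iff_integrableOn_Ioi).2 ((integrableOn_exp_mul_Ioi hc t).div_const _)

theorem integral_exp_mul_sub_Ici {c : ℝ} (hc : c < 0) (t : ℝ) :
    ∫ s in Ici t, exp (c * (s - t)) = 1 / -c := by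
  simp_rw [mul_sub, exp_sub]
  rw [integral_div, integral_Ici_eq_integral_Ioi, integral_exp_mul_Ioi hc]
  field_simp

variable {E : Type*} [NormedAddCommGroup E] {f : ℝ → E} {c C : ℝ}

theorem norm_intervalIntegral_le_of_norm_le_exp [NormedSpace ℝ E] {a b : ℝ} (hab : a ≤ b)
    (hc : 0 < c) (hf : ∀ s ∈ Icc a b, ‖f s‖ ≤ C * exp (c * (s - b))) :
    ‖∫ s in a..b, f s‖ ≤ C / c := by
  have hC : 0 ≤ C := by simpa using (norm_nonneg _).trans (hf b ⟨hab, le_rfl⟩)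
  calc ‖∫ s in a..b, f s‖ ≤ ∫ s in a..b, C * exp (c * (s - b)) :=
        intervalIntegral.norm_integral_le_of_norm_le hab
          (ae_of_all _ fun s hs => hf s (Ioc_subset_Icc_self hs))
          (Continuous.intervalIntegrable (by fun_prop) _ _)
    _ = C * ∫ s in a..b, exp (c * (s - b)) := intervalIntegral.integral_const_mul _ _
    _ ≤ C * (1 / c) := mul_le_mul_of_nonneg_left (intervalIntegral_exp_mul_sub_le hc a b) hC
    _ = C / c := mul_one_div C c

theorem integrableOn_Ici_of_norm_le_exp {t : ℝ} (hc : c < 0)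
    (hfm : AEStronglyMeasurable f (volume.restrict (Ici t)))
    (hf : ∀ s ∈ Ici t, ‖f s‖ ≤ C * exp (c * (s - t))) :
    IntegrableOn f (Ici t) :=
  ((integrableOn_exp_mul_sub_Ici hc t).const_mul C).mono' hfm
    ((ae_restrict_iff' measurableSet_Ici).2 (ae_of_all _ hf))

theorem norm_integral_Ici_le_of_norm_le_exp [NormedSpace ℝ E] {t : ℝ} (hc : c < 0)
    (hf : ∀ s ∈ Ici t, ‖f s‖ ≤ C * exp (c * (s - t))) :
    ‖∫ s in Ici t, f s‖ ≤ C / -c := by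
  calc ‖∫ s in Ici t, f s‖ ≤ ∫ s in Ici t, C * exp (c * (s - t)) :=
        norm_integral_le_of_norm_le ((integrableOn_exp_mul_sub_Ici hc t).const_mul C)
          ((ae_restrict_iff' measurableSet_Ici).2 (ae_of_all _ hf))
    _ = C / -c := by rw [integral_const_mul, integral_exp_mul_sub_Ici hc, mul_one_div]

end ExpIntegrals

section WeightedNorm

variable {E : Type*} [SeminormedAddCommGroup E] {σ t₀ : ℝ} {φ φ₁ φ₂ : ℝ → E}

/-- The values whose supremum is the norm `‖φ‖_σ` of the space `F_{σ,t₀}`. -/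
def expWeightedNorms (σ t₀ : ℝ) (φ : ℝ → E) : Set ℝ :=
  (fun s => exp (-σ * (s - t₀)) * ‖φ s‖) '' Ici t₀

theorem bddAbove_expWeightedNorms_sub (h₁ : BddAbove (expWeightedNorms σ t₀ φ₁))
    (h₂ : BddAbove (expWeightedNorms σ t₀ φ₂)) :
    BddAbove (expWeightedNorms σ t₀ fun s => φ₁ s - φ₂ s) := by
  obtain ⟨C₁, hC₁⟩ := h₁
  obtain ⟨C₂, hC₂⟩ := h₂
  refine ⟨C₁ + C₂, ?_⟩
  rintro _ ⟨s, hs, rfl⟩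
  calc exp (-σ * (s - t₀)) * ‖φ₁ s - φ₂ s‖
      ≤ exp (-σ * (s - t₀)) * ‖φ₁ s‖ + exp (-σ * (s - t₀)) * ‖φ₂ s‖ := by
        rw [← mul_add]; gcongr; exact norm_sub_le _ _
    _ ≤ C₁ + C₂ := add_le_add (hC₁ ⟨s, hs, rfl⟩) (hC₂ ⟨s, hs, rfl⟩)

theorem sSup_expWeightedNorms_nonneg (h : BddAbove (expWeightedNorms σ t₀ φ)) :
    0 ≤ sSup (expWeightedNorms σ t₀ φ) :=
  (by positivity : 0 ≤ exp (-σ * (t₀ - t₀)) * ‖φ t₀‖).trans (le_csSup h ⟨t₀, self_mem_Ici, rfl⟩)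

theorem norm_le_sSup_expWeightedNorms_mul_exp (h : BddAbove (expWeightedNorms σ t₀ φ)) {s : ℝ}
    (hs : t₀ ≤ s) : ‖φ s‖ ≤ sSup (expWeightedNorms σ t₀ φ) * exp (σ * (s - t₀)) :=
  exp_neg_mul_mul_le_iff.1 (le_csSup h ⟨s, hs, rfl⟩)

end WeightedNorm

theorem norm_prod_add_neg_sub {X Y : Type*} [SeminormedAddCommGroup X] [SeminormedAddCommGroup Y]
    (a x₁ x₂ : X) (y₁ y₂ : Y) :
    ‖((a + x₁, -y₁) : X × Y) - (a + x₂, -y₂)‖ = max ‖x₁ - x₂‖ ‖y₁ - y₂‖ := by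
  rw [Prod.mk_sub_mk, add_sub_add_left_eq_sub, neg_sub_neg, Prod.norm_mk, norm_sub_rev y₂]

section Evolution

variable {E : Type*} [NormedAddCommGroup E] [NormedSpace ℝ E] {K L a σ t₀ t : ℝ}

theorem norm_clm_apply_sub_le_exp {E' : Type*} [NormedAddCommGroup E'] [NormedSpace ℝ E']
    (T : E →L[ℝ] E') {v₁ v₂ : E} {s M : ℝ} (hK : 0 ≤ K) (hT : ‖T‖ ≤ K * exp (a * (t - s)))
    (hv : ‖v₁ - v₂‖ ≤ L * (M * exp (σ * (s - t₀)))) :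
    ‖T v₁ - T v₂‖ ≤ K * L * M * exp (σ * (t - t₀)) * exp ((σ - a) * (s - t)) :=
  calc ‖T v₁ - T v₂‖ = ‖T (v₁ - v₂)‖ := by rw [map_sub]
    _ ≤ ‖T‖ * ‖v₁ - v₂‖ := T.le_opNorm _
    _ ≤ K * exp (a * (t - s)) * (L * (M * exp (σ * (s - t₀)))) :=
        mul_le_mul hT hv (norm_nonneg _) (by positivity)
    _ = K * L * M * (exp (a * (t - s)) * exp (σ * (s - t₀))) := by ring
    _ = K * L * M * exp (σ * (t - t₀)) * exp ((σ - a) * (s - t)) := by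
        rw [exp_mul_sub_mul_exp_mul_sub]; ring

theorem continuousOn_evolution_apply {Z : Type*} [TopologicalSpace Z] {Λ : ℝ → ℝ → E →L[ℝ] E}
    {H : ℝ → Z → E} (hΛc : Continuous fun p : ℝ × ℝ => Λ p.1 p.2)
    (hHc : Continuous fun p : ℝ × Z => H p.1 p.2) {φ : ℝ → Z} {S : Set ℝ}
    (hφ : ContinuousOn φ S) : ContinuousOn (fun s => Λ t s (H s (φ s))) S :=
  (hΛc.comp (continuous_const.prodMk continuous_id)).continuousOn.clm_apply
    (hHc.comp_continuousOn (continuousOn_id.prodMk hφ))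

variable {Z : Type*} [SeminormedAddCommGroup Z] {Λ : ℝ → ℝ → E →L[ℝ] E} {H : ℝ → Z → E}
  {φ φ₁ φ₂ : ℝ → Z} {M : ℝ}

theorem norm_sub_intervalIntegral_evolution_le (hK : 0 ≤ K) (hL : 0 ≤ L) (hσ : a < σ)
    (ht : t₀ ≤ t) (hΛ : ∀ s ∈ Icc t₀ t, ‖Λ t s‖ ≤ K * exp (a * (t - s)))
    (hΛc : Continuous fun p : ℝ × ℝ => Λ p.1 p.2) (hHc : Continuous fun p : ℝ × Z => H p.1 p.2)
    (hHL : ∀ s z₁ z₂, ‖H s z₁ - H s z₂‖ ≤ L * ‖z₁ - z₂‖)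
    (hφ₁ : ContinuousOn φ₁ (Icc t₀ t)) (hφ₂ : ContinuousOn φ₂ (Icc t₀ t))
    (hM : ∀ s ∈ Icc t₀ t, ‖φ₁ s - φ₂ s‖ ≤ M * exp (σ * (s - t₀))) :
    ‖(∫ s in t₀..t, Λ t s (H s (φ₁ s))) - ∫ s in t₀..t, Λ t s (H s (φ₂ s))‖ ≤
      K * L / (σ - a) * M * exp (σ * (t - t₀)) := by
  rw [← intervalIntegral.integral_sub
    ((continuousOn_evolution_apply hΛc hHc hφ₁).intervalIntegrable_of_Icc ht)
    ((continuousOn_evolution_apply hΛc hHc hφ₂).intervalIntegrable_of_Icc ht)]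
  refine (norm_intervalIntegral_le_of_norm_le_exp (C := K * L * M * exp (σ * (t - t₀))) ht
    (sub_pos.2 hσ) fun s hs => ?_).trans_eq (by ring)
  exact norm_clm_apply_sub_le_exp _ hK (hΛ s hs)
    ((hHL s _ _).trans (mul_le_mul_of_nonneg_left (hM s hs) hL))

theorem integrableOn_Ici_evolution (hK : 0 ≤ K) (hL : 0 ≤ L) (hσ : σ < a)
    (hΛ : ∀ s ∈ Ici t, ‖Λ t s‖ ≤ K * exp (a * (t - s)))
    (hΛc : Continuous fun p : ℝ × ℝ => Λ p.1 p.2) (hHc : Continuous fun p : ℝ × Z => H p.1 p.2)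
    (hH0 : ∀ s, H s 0 = 0) (hHL : ∀ s z₁ z₂, ‖H s z₁ - H s z₂‖ ≤ L * ‖z₁ - z₂‖)
    (hφ : ContinuousOn φ (Ici t)) (hM : ∀ s ∈ Ici t, ‖φ s‖ ≤ M * exp (σ * (s - t₀))) :
    IntegrableOn (fun s => Λ t s (H s (φ s))) (Ici t) := by
  refine integrableOn_Ici_of_norm_le_exp (C := K * L * M * exp (σ * (t - t₀))) (sub_neg.2 hσ)
    ((continuousOn_evolution_apply hΛc hHc hφ).aestronglyMeasurable measurableSet_Ici)
    fun s hs => ?_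
  have hφ0 : ‖H s (φ s) - H s 0‖ ≤ L * (M * exp (σ * (s - t₀))) :=
    (hHL s _ _).trans (by rw [sub_zero]; exact mul_le_mul_of_nonneg_left (hM s hs) hL)
  simpa [hH0] using norm_clm_apply_sub_le_exp (Λ t s) hK (hΛ s hs) hφ0

theorem norm_sub_integral_Ici_evolution_le (hK : 0 ≤ K) (hL : 0 ≤ L) (hσ : σ < a)
    (hΛ : ∀ s ∈ Ici t, ‖Λ t s‖ ≤ K * exp (a * (t - s)))
    (hΛc : Continuous fun p : ℝ × ℝ => Λ p.1 p.2) (hHc : Continuous fun p : ℝ × Z => H p.1 p.2)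
    (hH0 : ∀ s, H s 0 = 0) (hHL : ∀ s z₁ z₂, ‖H s z₁ - H s z₂‖ ≤ L * ‖z₁ - z₂‖)
    (hφ₁ : ContinuousOn φ₁ (Ici t)) (hφ₂ : ContinuousOn φ₂ (Ici t)) {C₁ C₂ : ℝ}
    (hC₁ : ∀ s ∈ Ici t, ‖φ₁ s‖ ≤ C₁ * exp (σ * (s - t₀)))
    (hC₂ : ∀ s ∈ Ici t, ‖φ₂ s‖ ≤ C₂ * exp (σ * (s - t₀)))
    (hM : ∀ s ∈ Ici t, ‖φ₁ s - φ₂ s‖ ≤ M * exp (σ * (s - t₀))) :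
    ‖(∫ s in Ici t, Λ t s (H s (φ₁ s))) - ∫ s in Ici t, Λ t s (H s (φ₂ s))‖ ≤
      K * L / (a - σ) * M * exp (σ * (t - t₀)) := by
  rw [← integral_sub (integrableOn_Ici_evolution hK hL hσ hΛ hΛc hHc hH0 hHL hφ₁ hC₁)
    (integrableOn_Ici_evolution hK hL hσ hΛ hΛc hHc hH0 hHL hφ₂ hC₂)]
  refine (norm_integral_Ici_le_of_norm_le_exp (C := K * L * M * exp (σ * (t - t₀)))
    (sub_neg.2 hσ) fun s hs => ?_).trans_eq
    (by rw [neg_sub]; ring)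
  exact norm_clm_apply_sub_le_exp _ hK (hΛ s hs)
    ((hHL s _ _).trans (mul_le_mul_of_nonneg_left (hM s hs) hL))

end Evolution

theorem lyapunov_perron_contraction_general
    {X Y : Type*} [NormedAddCommGroup X] [NormedSpace ℝ X]
    [NormedAddCommGroup Y] [NormedSpace ℝ Y]
    (ΛA : ℝ → ℝ → X →L[ℝ] X) (ΛB : ℝ → ℝ → Y →L[ℝ] Y)
    (F : ℝ → X × Y → X) (G : ℝ → X × Y → Y)
    (K L α β σ t₀ : ℝ) (x₀ : X)
    (hK : 1 ≤ K) (hL : 0 < L)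
    (hΛA : ∀ t s, s ≤ t → ‖ΛA t s‖ ≤ K * Real.exp (α * (t - s)))
    (hΛB : ∀ t s, t ≤ s → ‖ΛB t s‖ ≤ K * Real.exp (β * (t - s)))
    (hΛAc : Continuous fun p : ℝ × ℝ => ΛA p.1 p.2)
    (hΛBc : Continuous fun p : ℝ × ℝ => ΛB p.1 p.2)
    (hFc : Continuous fun p : ℝ × (X × Y) => F p.1 p.2)
    (hGc : Continuous fun p : ℝ × (X × Y) => G p.1 p.2)
    (hG0 : ∀ t, G t 0 = 0)
    (hLip : ∀ t z₁ z₂, max ‖F t z₁ - F t z₂‖ ‖G t z₁ - G t z₂‖ ≤ L * ‖z₁ - z₂‖)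
    (hσ1 : α + K * L < σ) (hσ2 : σ < β - K * L) :
    max (K * L / (σ - α)) (K * L / (β - σ)) < 1 ∧
    ∀ φ₁ φ₂ : ℝ → X × Y,
      ContinuousOn φ₁ (Set.Ici t₀) → ContinuousOn φ₂ (Set.Ici t₀) →
      BddAbove ((fun s => Real.exp (-σ * (s - t₀)) * ‖φ₁ s‖) '' Set.Ici t₀) →
      BddAbove ((fun s => Real.exp (-σ * (s - t₀)) * ‖φ₂ s‖) '' Set.Ici t₀) →
      ∀ t, t₀ ≤ t →
        Real.exp (-σ * (t - t₀)) *
            ‖((ΛA t t₀ x₀ + ∫ s in t₀..t, ΛA t s (F s (φ₁ s)),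
                -∫ s in Set.Ici t, ΛB t s (G s (φ₁ s))) : X × Y) -
              (ΛA t t₀ x₀ + ∫ s in t₀..t, ΛA t s (F s (φ₂ s)),
                -∫ s in Set.Ici t, ΛB t s (G s (φ₂ s)))‖
          ≤ max (K * L / (σ - α)) (K * L / (β - σ)) *
              sSup ((fun s => Real.exp (-σ * (s - t₀)) * ‖φ₁ s - φ₂ s‖) '' Set.Ici t₀) := by
  have hK0 : 0 ≤ K := zero_le_one.trans hK
  have hKL : 0 ≤ K * L := mul_nonneg hK0 hL.le
  refine ⟨max_div_lt_one_of_lt hKL hσ1 hσ2, ?_⟩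
  intro φ₁ φ₂ hφ₁ hφ₂ hb₁ hb₂ t ht
  have hb := bddAbove_expWeightedNorms_sub hb₁ hb₂
  have hM s (hs : t₀ ≤ s) := norm_le_sSup_expWeightedNorms_mul_exp hb hs
  have hFL s z₁ z₂ := (le_max_left _ _).trans (hLip s z₁ z₂)
  have hGL s z₁ z₂ := (le_max_right _ _).trans (hLip s z₁ z₂)
  have hIci : Ici t ⊆ Ici t₀ := Ici_subset_Ici.2 ht
  have hforward := norm_sub_intervalIntegral_evolution_le hK0 hL.le (by linarith) ht
    (fun s hs => hΛA t s hs.2) hΛAc hFc hFL (hφ₁.mono Icc_subset_Ici_self)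
    (hφ₂.mono Icc_subset_Ici_self) fun s hs => hM s hs.1
  have hbackward := norm_sub_integral_Ici_evolution_le hK0 hL.le (by linarith : σ < β)
    (fun s hs => hΛB t s hs) hΛBc hGc hG0 hGL (hφ₁.mono hIci) (hφ₂.mono hIci)
    (fun s hs => norm_le_sSup_expWeightedNorms_mul_exp hb₁ (ht.trans hs))
    (fun s hs => norm_le_sSup_expWeightedNorms_mul_exp hb₂ (ht.trans hs))
    fun s hs => hM s (ht.trans hs)
  have hM0 := sSup_expWeightedNorms_nonneg hb
  rw [exp_neg_mul_mul_le_iff, norm_prod_add_neg_sub]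
  have hweight : 0 ≤ exp (σ * (t - t₀)) := (exp_pos _).le
  exact max_le
    (hforward.trans (mul_le_mul_of_nonneg_right
      (mul_le_mul_of_nonneg_right (le_max_left _ _) hM0) hweight))
    (hbackward.trans (mul_le_mul_of_nonneg_right
      (mul_le_mul_of_nonneg_right (le_max_right _ _) hM0) hweight))

theorem lyapunov_perron_contraction
    {X Y : Type*} [NormedAddCommGroup X] [NormedSpace ℝ X] [CompleteSpace X]
    [NormedAddCommGroup Y] [NormedSpace ℝ Y] [CompleteSpace Y]
    (ΛA : ℝ → ℝ → X →L[ℝ] X) (ΛB : ℝ → ℝ → Y →L[ℝ] Y)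
    (F : ℝ → X × Y → X) (G : ℝ → X × Y → Y)
    (K L α β σ t₀ : ℝ) (x₀ : X)
    (hK : 1 ≤ K) (hL : 0 < L) (hαβ : α < β)
    (hΛA : ∀ t s, s ≤ t → ‖ΛA t s‖ ≤ K * Real.exp (α * (t - s)))
    (hΛB : ∀ t s, t ≤ s → ‖ΛB t s‖ ≤ K * Real.exp (β * (t - s)))
    (hΛAc : Continuous fun p : ℝ × ℝ => ΛA p.1 p.2)
    (hΛBc : Continuous fun p : ℝ × ℝ => ΛB p.1 p.2)
    (hFc : Continuous fun p : ℝ × (X × Y) => F p.1 p.2)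
    (hGc : Continuous fun p : ℝ × (X × Y) => G p.1 p.2)
    (hF0 : ∀ t, F t 0 = 0) (hG0 : ∀ t, G t 0 = 0)
    (hLip : ∀ t z₁ z₂, max ‖F t z₁ - F t z₂‖ ‖G t z₁ - G t z₂‖ ≤ L * ‖z₁ - z₂‖)
    (hgap : L < (β - α) / (2 * K))
    (hσ1 : α + K * L < σ) (hσ2 : σ < β - K * L) :
    max (K * L / (σ - α)) (K * L / (β - σ)) < 1 ∧
    ∀ φ₁ φ₂ : ℝ → X × Y,
      ContinuousOn φ₁ (Set.Ici t₀) → ContinuousOn φ₂ (Set.Ici t₀) →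
      BddAbove ((fun s => Real.exp (-σ * (s - t₀)) * ‖φ₁ s‖) '' Set.Ici t₀) →
      BddAbove ((fun s => Real.exp (-σ * (s - t₀)) * ‖φ₂ s‖) '' Set.Ici t₀) →
      ∀ t, t₀ ≤ t →
        Real.exp (-σ * (t - t₀)) *
            ‖((ΛA t t₀ x₀ + ∫ s in t₀..t, ΛA t s (F s (φ₁ s)),
                -∫ s in Set.Ici t, ΛB t s (G s (φ₁ s))) : X × Y) -
              (ΛA t t₀ x₀ + ∫ s in t₀..t, ΛA t s (F s (φ₂ s)),
                -∫ s in Set.Ici t, ΛB t s (G s (φ₂ s)))‖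
          ≤ max (K * L / (σ - α)) (K * L / (β - σ)) *
              sSup ((fun s => Real.exp (-σ * (s - t₀)) * ‖φ₁ s - φ₂ s‖) '' Set.Ici t₀) :=
  lyapunov_perron_contraction_general ΛA ΛB F G K L α β σ t₀ x₀ hK hL hΛA hΛB hΛAc hΛBc hFc hGc hG0
    hLip hσ1 hσ2
end

section
/- Under hypotheses (H1)–(H3), the truncated map 𝒯_T(φ, x₀, t₀)(t) = Λ_A(t,t₀)x₀ + ∫_{t₀}^{t} Λ_A(t,s) F(φ(s)) ds − ∫_{t}^{T} Λ_B(t,s) G(φ(s)) ds is a contraction on C([t₀,T], X×Y) with the weighted norm ‖φ‖_{σ,T} = max_{t₀≤t≤T} e^{−σ(t−t₀)}‖φ(t)‖, hence has a unique fixed point φ_T. -/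
/-!
With the weight `e^{σ(t-t₀)}`, the dichotomy bounds turn the two Lipschitz-perturbed integrals
into `∫_{t₀}^t e^{α(t-s)} e^{σ(s-t₀)} ds ≤ e^{σ(t-t₀)}/(σ-α)` and
`∫_t^T e^{β(t-s)} e^{σ(s-t₀)} ds ≤ e^{σ(t-t₀)}/(β-σ)`, so the operator contracts in the weighted
sup norm with constant `max (KL/(σ-α)) (KL/(β-σ)) < 1`. Multiplying by `e^{-σ(t-t₀)}` identifies
the weighted space with `C([t₀,T], X × Y)` under the sup norm, where Banach's fixed point theorem
gives the unique fixed point.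
-/

open MeasureTheory Set Real

theorem integral_exp_mul_exp {γ σ : ℝ} (h : γ ≠ σ) (a b t t₀ : ℝ) :
    ∫ s in a..b, exp (γ * (t - s)) * exp (σ * (s - t₀))
      = exp (σ * (t - t₀)) * ((exp ((σ - γ) * (b - t)) - exp ((σ - γ) * (a - t))) / (σ - γ)) := by
  have hc : σ - γ ≠ 0 := sub_ne_zero.2 h.symm
  have hsplit : ∀ s, exp (γ * (t - s)) * exp (σ * (s - t₀))
      = exp (σ * (t - t₀)) * exp ((σ - γ) * s - (σ - γ) * t) := fun s => by
    rw [← exp_add, ← exp_add]; ring_nf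
  simp_rw [hsplit]
  rw [intervalIntegral.integral_const_mul, intervalIntegral.integral_comp_mul_sub (f := exp) hc,
    integral_exp, smul_eq_mul, ← mul_sub, ← mul_sub, inv_mul_eq_div]

theorem integral_exp_mul_exp_le_of_lt {γ σ : ℝ} (h : γ < σ) (t₀ t : ℝ) :
    ∫ s in t₀..t, exp (γ * (t - s)) * exp (σ * (s - t₀)) ≤ exp (σ * (t - t₀)) / (σ - γ) := by
  rw [integral_exp_mul_exp h.ne, sub_self, mul_zero, exp_zero, mul_div_assoc']
  refine div_le_div_of_nonneg_right (mul_le_of_le_one_right (exp_pos _).le ?_) (by linarith)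
  linarith [exp_pos ((σ - γ) * (t₀ - t))]

theorem integral_exp_mul_exp_le_of_gt {γ σ : ℝ} (h : σ < γ) (t₀ t T : ℝ) :
    ∫ s in t..T, exp (γ * (t - s)) * exp (σ * (s - t₀)) ≤ exp (σ * (t - t₀)) / (γ - σ) := by
  rw [integral_exp_mul_exp h.ne', sub_self, mul_zero, exp_zero, ← neg_sub γ σ, div_neg,
    ← neg_div, neg_sub, mul_div_assoc']
  refine div_le_div_of_nonneg_right (mul_le_of_le_one_right (exp_pos _).le ?_) (by linarith)
  linarith [exp_pos (-(γ - σ) * (T - t))]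

theorem norm_integral_clm_apply_sub_le {E E' : Type*} [NormedAddCommGroup E] [NormedSpace ℝ E]
    [NormedAddCommGroup E'] [NormedSpace ℝ E'] {Λ : ℝ → E →L[ℝ] E'} {u v : ℝ → E} {k c : ℝ → ℝ}
    {a b : ℝ} (hab : a ≤ b) (hΛ : ContinuousOn Λ (Icc a b)) (hu : ContinuousOn u (Icc a b))
    (hv : ContinuousOn v (Icc a b)) (hkc : IntervalIntegrable (fun s => k s * c s) volume a b)
    (hk : ∀ s ∈ Icc a b, ‖Λ s‖ ≤ k s) (hc : ∀ s ∈ Icc a b, ‖u s - v s‖ ≤ c s) :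
    ‖(∫ s in a..b, Λ s (u s)) - ∫ s in a..b, Λ s (v s)‖ ≤ ∫ s in a..b, k s * c s := by
  have hint : ∀ w : ℝ → E, ContinuousOn w (Icc a b) →
      IntervalIntegrable (fun s => Λ s (w s)) volume a b := fun w hw =>
    (hΛ.clm_apply hw).intervalIntegrable_of_Icc hab
  rw [← intervalIntegral.integral_sub (hint u hu) (hint v hv)]
  refine intervalIntegral.norm_integral_le_of_norm_le hab (ae_of_all _ fun s hs => ?_) hkc
  rw [← map_sub]
  exact (Λ s).le_of_opNorm_le_of_le (hk s (Ioc_subset_Icc_self hs)) (hc s (Ioc_subset_Icc_self hs))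

section Integrals

variable {Z E : Type*} [NormedAddCommGroup Z] [NormedAddCommGroup E] [NormedSpace ℝ E]
  {Λ : ℝ → ℝ → E →L[ℝ] E} {F : ℝ → Z → E} {K L σ t₀ T M t : ℝ} {φ₁ φ₂ : ℝ → Z}

theorem norm_integral_stable_sub_le {α : ℝ}
    (hΛ : ∀ t s, s ≤ t → ‖Λ t s‖ ≤ K * exp (α * (t - s)))
    (hΛc : Continuous fun p : ℝ × ℝ => Λ p.1 p.2) (hFc : Continuous fun p : ℝ × Z => F p.1 p.2)
    (hL : 0 ≤ L) (hF : ∀ t z₁ z₂, ‖F t z₁ - F t z₂‖ ≤ L * ‖z₁ - z₂‖) (hασ : α < σ)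
    (h₁ : ContinuousOn φ₁ (Icc t₀ T)) (h₂ : ContinuousOn φ₂ (Icc t₀ T))
    (hM : ∀ s ∈ Icc t₀ T, ‖φ₁ s - φ₂ s‖ ≤ M * exp (σ * (s - t₀))) (ht : t ∈ Icc t₀ T) :
    ‖(∫ s in t₀..t, Λ t s (F s (φ₁ s))) - ∫ s in t₀..t, Λ t s (F s (φ₂ s))‖
      ≤ K * L / (σ - α) * (M * exp (σ * (t - t₀))) := by
  have hsub : Icc t₀ t ⊆ Icc t₀ T := Icc_subset_Icc_right ht.2
  have hK : 0 ≤ K := by simpa using (norm_nonneg _).trans (hΛ t t le_rfl)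
  have hM0 : 0 ≤ M := nonneg_of_mul_nonneg_left ((norm_nonneg _).trans (hM t ht)) (exp_pos _)
  calc _ ≤ ∫ s in t₀..t, K * exp (α * (t - s)) * (L * (M * exp (σ * (s - t₀)))) :=
        norm_integral_clm_apply_sub_le (Λ := Λ t) (u := fun s => F s (φ₁ s))
          (v := fun s => F s (φ₂ s)) ht.1 (hΛc.comp (Continuous.prodMk_right t)).continuousOn
          ((hFc.comp_continuousOn (continuousOn_id.prodMk h₁)).mono hsub)
          ((hFc.comp_continuousOn (continuousOn_id.prodMk h₂)).mono hsub)
          (by apply Continuous.intervalIntegrable; fun_prop)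
          (fun s hs => hΛ t s hs.2)
          (fun s hs => (hF s _ _).trans (mul_le_mul_of_nonneg_left (hM s (hsub hs)) hL))
    _ = K * L * M * ∫ s in t₀..t, exp (α * (t - s)) * exp (σ * (s - t₀)) := by
        rw [← intervalIntegral.integral_const_mul]; congr 1; ext s; ring
    _ ≤ K * L * M * (exp (σ * (t - t₀)) / (σ - α)) := by
        gcongr; exact integral_exp_mul_exp_le_of_lt hασ t₀ t
    _ = K * L / (σ - α) * (M * exp (σ * (t - t₀))) := by ring

theorem norm_integral_unstable_sub_le {β : ℝ}
    (hΛ : ∀ t s, t ≤ s → ‖Λ t s‖ ≤ K * exp (β * (t - s)))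
    (hΛc : Continuous fun p : ℝ × ℝ => Λ p.1 p.2) (hFc : Continuous fun p : ℝ × Z => F p.1 p.2)
    (hL : 0 ≤ L) (hF : ∀ t z₁ z₂, ‖F t z₁ - F t z₂‖ ≤ L * ‖z₁ - z₂‖) (hσβ : σ < β)
    (h₁ : ContinuousOn φ₁ (Icc t₀ T)) (h₂ : ContinuousOn φ₂ (Icc t₀ T))
    (hM : ∀ s ∈ Icc t₀ T, ‖φ₁ s - φ₂ s‖ ≤ M * exp (σ * (s - t₀))) (ht : t ∈ Icc t₀ T) :
    ‖(∫ s in t..T, Λ t s (F s (φ₁ s))) - ∫ s in t..T, Λ t s (F s (φ₂ s))‖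
      ≤ K * L / (β - σ) * (M * exp (σ * (t - t₀))) := by
  have hsub : Icc t T ⊆ Icc t₀ T := Icc_subset_Icc_left ht.1
  have hK : 0 ≤ K := by simpa using (norm_nonneg _).trans (hΛ t t le_rfl)
  have hM0 : 0 ≤ M := nonneg_of_mul_nonneg_left ((norm_nonneg _).trans (hM t ht)) (exp_pos _)
  calc _ ≤ ∫ s in t..T, K * exp (β * (t - s)) * (L * (M * exp (σ * (s - t₀)))) :=
        norm_integral_clm_apply_sub_le (Λ := Λ t) (u := fun s => F s (φ₁ s))
          (v := fun s => F s (φ₂ s)) ht.2 (hΛc.comp (Continuous.prodMk_right t)).continuousOn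
          ((hFc.comp_continuousOn (continuousOn_id.prodMk h₁)).mono hsub)
          ((hFc.comp_continuousOn (continuousOn_id.prodMk h₂)).mono hsub)
          (by apply Continuous.intervalIntegrable; fun_prop)
          (fun s hs => hΛ t s hs.1)
          (fun s hs => (hF s _ _).trans (mul_le_mul_of_nonneg_left (hM s (hsub hs)) hL))
    _ = K * L * M * ∫ s in t..T, exp (β * (t - s)) * exp (σ * (s - t₀)) := by
        rw [← intervalIntegral.integral_const_mul]; congr 1; ext s; ring
    _ ≤ K * L * M * (exp (σ * (t - t₀)) / (β - σ)) := by
        gcongr; exact integral_exp_mul_exp_le_of_gt hσβ t₀ t T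
    _ = K * L / (β - σ) * (M * exp (σ * (t - t₀))) := by ring

end Integrals

theorem exp_neg_mul_le_iff {σ x a M : ℝ} : exp (-σ * x) * a ≤ M ↔ a ≤ M * exp (σ * x) := by
  rw [neg_mul, exp_neg, inv_mul_le_iff₀ (exp_pos _), mul_comm]

section LyapunovPerron

variable {X Y : Type*} [NormedAddCommGroup X] [NormedSpace ℝ X] [NormedAddCommGroup Y]
  [NormedSpace ℝ Y] (ΛA : ℝ → ℝ → X →L[ℝ] X) (ΛB : ℝ → ℝ → Y →L[ℝ] Y)
  (F : ℝ → X × Y → X) (G : ℝ → X × Y → Y) (t₀ T : ℝ) (x₀ : X)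

noncomputable def lyapunovPerronMap (φ : ℝ → X × Y) (t : ℝ) : X × Y :=
  (ΛA t t₀ x₀ + ∫ s in t₀..t, ΛA t s (F s (φ s)), -∫ s in t..T, ΛB t s (G s (φ s)))

variable {ΛA ΛB F G t₀ T x₀}

theorem continuous_lyapunovPerronMap (hΛAc : Continuous fun p : ℝ × ℝ => ΛA p.1 p.2)
    (hΛBc : Continuous fun p : ℝ × ℝ => ΛB p.1 p.2)
    (hFc : Continuous fun p : ℝ × (X × Y) => F p.1 p.2)
    (hGc : Continuous fun p : ℝ × (X × Y) => G p.1 p.2) {φ : ℝ → X × Y} (hφ : Continuous φ) :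
    Continuous (lyapunovPerronMap ΛA ΛB F G t₀ T x₀ φ) := by
  have hA : Continuous fun p : ℝ × ℝ => ΛA p.1 p.2 (F p.2 (φ p.2)) :=
    hΛAc.clm_apply (hFc.comp (continuous_snd.prodMk (hφ.comp continuous_snd)))
  have hB : Continuous fun p : ℝ × ℝ => ΛB p.1 p.2 (G p.2 (φ p.2)) :=
    hΛBc.clm_apply (hGc.comp (continuous_snd.prodMk (hφ.comp continuous_snd)))
  have hB' : Continuous fun t => -∫ s in t..T, ΛB t s (G s (φ s)) := by
    simp_rw [intervalIntegral.integral_symm T, neg_neg]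
    exact intervalIntegral.continuous_parametric_intervalIntegral_of_continuous hB continuous_id
  refine (((hΛAc.comp (continuous_id.prodMk continuous_const)).clm_apply continuous_const).add
    ?_).prodMk hB'
  exact intervalIntegral.continuous_parametric_intervalIntegral_of_continuous hA continuous_id

theorem lyapunovPerronMap_congr {φ ψ : ℝ → X × Y} (h : EqOn φ ψ (Icc t₀ T)) :
    EqOn (lyapunovPerronMap ΛA ΛB F G t₀ T x₀ φ) (lyapunovPerronMap ΛA ΛB F G t₀ T x₀ ψ)
      (Icc t₀ T) := by
  intro t ht
  have hA : ∫ s in t₀..t, ΛA t s (F s (φ s)) = ∫ s in t₀..t, ΛA t s (F s (ψ s)) :=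
    intervalIntegral.integral_congr fun s hs => by
      rw [uIcc_of_le ht.1] at hs
      simp only [h ⟨hs.1, hs.2.trans ht.2⟩]
  have hB : ∫ s in t..T, ΛB t s (G s (φ s)) = ∫ s in t..T, ΛB t s (G s (ψ s)) :=
    intervalIntegral.integral_congr fun s hs => by
      rw [uIcc_of_le ht.2] at hs
      simp only [h ⟨ht.1.trans hs.1, hs.2⟩]
  simp only [lyapunovPerronMap, hA, hB]

theorem lyapunovPerronMap_weighted_norm_sub_le {K L α β σ : ℝ}
    (hΛA : ∀ t s, s ≤ t → ‖ΛA t s‖ ≤ K * exp (α * (t - s)))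
    (hΛB : ∀ t s, t ≤ s → ‖ΛB t s‖ ≤ K * exp (β * (t - s)))
    (hΛAc : Continuous fun p : ℝ × ℝ => ΛA p.1 p.2)
    (hΛBc : Continuous fun p : ℝ × ℝ => ΛB p.1 p.2)
    (hFc : Continuous fun p : ℝ × (X × Y) => F p.1 p.2)
    (hGc : Continuous fun p : ℝ × (X × Y) => G p.1 p.2) (hL : 0 ≤ L)
    (hF : ∀ t z₁ z₂, ‖F t z₁ - F t z₂‖ ≤ L * ‖z₁ - z₂‖)
    (hG : ∀ t z₁ z₂, ‖G t z₁ - G t z₂‖ ≤ L * ‖z₁ - z₂‖) (hασ : α < σ) (hσβ : σ < β)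
    (φ₁ φ₂ : ℝ → X × Y) (h₁ : ContinuousOn φ₁ (Icc t₀ T)) (h₂ : ContinuousOn φ₂ (Icc t₀ T))
    (M : ℝ) (hM : ∀ s ∈ Icc t₀ T, exp (-σ * (s - t₀)) * ‖φ₁ s - φ₂ s‖ ≤ M)
    (t : ℝ) (ht : t ∈ Icc t₀ T) :
    exp (-σ * (t - t₀)) * ‖lyapunovPerronMap ΛA ΛB F G t₀ T x₀ φ₁ t -
        lyapunovPerronMap ΛA ΛB F G t₀ T x₀ φ₂ t‖
      ≤ max (K * L / (σ - α)) (K * L / (β - σ)) * M := by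
  simp only [exp_neg_mul_le_iff] at hM ⊢
  rw [mul_assoc, lyapunovPerronMap, lyapunovPerronMap, Prod.mk_sub_mk, Prod.norm_mk,
    add_sub_add_left_eq_sub, neg_sub_neg,
    norm_sub_rev (∫ s in t..T, ΛB t s (G s (φ₂ s)))]
  have hM0 : 0 ≤ M * exp (σ * (t - t₀)) := (norm_nonneg _).trans (hM t ht)
  exact max_le
    ((norm_integral_stable_sub_le hΛA hΛAc hFc hL hF hασ h₁ h₂ hM ht).trans
      (mul_le_mul_of_nonneg_right (le_max_left _ _) hM0))
    ((norm_integral_unstable_sub_le hΛB hΛBc hGc hL hG hσβ h₁ h₂ hM ht).trans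
      (mul_le_mul_of_nonneg_right (le_max_right _ _) hM0))

end LyapunovPerron

section Weighted

variable {V : Type*} [NormedAddCommGroup V] [NormedSpace ℝ V] {t₀ T : ℝ} (σ : ℝ)

noncomputable def ofWeighted (hT : t₀ ≤ T) (f : C(Icc t₀ T, V)) (s : ℝ) : V :=
  exp (σ * (s - t₀)) • f (projIcc t₀ T hT s)

noncomputable def toWeighted {φ : ℝ → V} (hφ : ContinuousOn φ (Icc t₀ T)) : C(Icc t₀ T, V) :=
  ⟨fun u => exp (-σ * (u - t₀)) • φ u, (by fun_prop : Continuous fun u : Icc t₀ T =>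
    exp (-σ * (u - t₀))).smul hφ.domRestrict⟩

theorem continuous_ofWeighted (hT : t₀ ≤ T) (f : C(Icc t₀ T, V)) :
    Continuous (ofWeighted σ hT f) := by
  unfold ofWeighted; fun_prop

theorem exp_neg_mul_norm_ofWeighted_sub (hT : t₀ ≤ T) (f₁ f₂ : C(Icc t₀ T, V)) {s : ℝ}
    (hs : s ∈ Icc t₀ T) :
    exp (-σ * (s - t₀)) * ‖ofWeighted σ hT f₁ s - ofWeighted σ hT f₂ s‖
      = dist (f₁ ⟨s, hs⟩) (f₂ ⟨s, hs⟩) := by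
  rw [ofWeighted, ofWeighted, projIcc_of_mem _ hs, ← smul_sub, norm_smul, norm_of_nonneg
    (exp_pos _).le, ← mul_assoc, ← exp_add, neg_mul, neg_add_cancel, exp_zero, one_mul,
    dist_eq_norm]

theorem dist_toWeighted_apply {φ ψ : ℝ → V} (hφ : ContinuousOn φ (Icc t₀ T))
    (hψ : ContinuousOn ψ (Icc t₀ T)) (u : Icc t₀ T) :
    dist (toWeighted σ hφ u) (toWeighted σ hψ u) = exp (-σ * (u - t₀)) * ‖φ u - ψ u‖ := by
  simp only [dist_eq_norm, toWeighted, ContinuousMap.coe_mk]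
  rw [← smul_sub, norm_smul, norm_of_nonneg (exp_pos _).le]

theorem ofWeighted_toWeighted (hT : t₀ ≤ T) {φ : ℝ → V} (hφ : ContinuousOn φ (Icc t₀ T)) :
    EqOn (ofWeighted σ hT (toWeighted σ hφ)) φ (Icc t₀ T) := by
  intro s hs
  simp only [ofWeighted, projIcc_of_mem _ hs, toWeighted, ContinuousMap.coe_mk]
  rw [smul_smul, ← exp_add, neg_mul, add_neg_cancel, exp_zero, one_smul]

theorem toWeighted_congr {φ ψ : ℝ → V} (hφ : ContinuousOn φ (Icc t₀ T))
    (hψ : ContinuousOn ψ (Icc t₀ T)) (h : EqOn φ ψ (Icc t₀ T)) :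
    toWeighted σ hφ = toWeighted σ hψ := by
  ext u
  simp only [toWeighted, ContinuousMap.coe_mk, h u.2]

theorem exists_fixedPoint_of_weighted_contraction [CompleteSpace V] (hT : t₀ ≤ T)
    {𝒯 : (ℝ → V) → ℝ → V} (hcont : ∀ φ, Continuous φ → Continuous (𝒯 φ))
    (hcongr : ∀ φ ψ, EqOn φ ψ (Icc t₀ T) → EqOn (𝒯 φ) (𝒯 ψ) (Icc t₀ T))
    {q : ℝ} (hq0 : 0 ≤ q) (hq1 : q < 1)
    (hcontr : ∀ φ₁ φ₂, ContinuousOn φ₁ (Icc t₀ T) → ContinuousOn φ₂ (Icc t₀ T) → ∀ M,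
      (∀ s ∈ Icc t₀ T, exp (-σ * (s - t₀)) * ‖φ₁ s - φ₂ s‖ ≤ M) →
      ∀ t ∈ Icc t₀ T, exp (-σ * (t - t₀)) * ‖𝒯 φ₁ t - 𝒯 φ₂ t‖ ≤ q * M) :
    ∃ φT : ℝ → V, ContinuousOn φT (Icc t₀ T) ∧ (∀ t ∈ Icc t₀ T, φT t = 𝒯 φT t) ∧
      ∀ ψ : ℝ → V, ContinuousOn ψ (Icc t₀ T) → (∀ t ∈ Icc t₀ T, ψ t = 𝒯 ψ t) →
        EqOn φT ψ (Icc t₀ T) := by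
  have hcont' (f : C(Icc t₀ T, V)) := continuous_ofWeighted σ hT f
  let Φ (f : C(Icc t₀ T, V)) : C(Icc t₀ T, V) := toWeighted σ (hcont _ (hcont' f)).continuousOn
  have hΦ : ContractingWith ⟨q, hq0⟩ Φ := by
    refine ⟨hq1, LipschitzWith.of_dist_le_mul fun f₁ f₂ => ?_⟩
    refine (ContinuousMap.dist_le (by positivity)).2 fun u => ?_
    rw [dist_toWeighted_apply]
    refine hcontr _ _ (hcont' f₁).continuousOn (hcont' f₂).continuousOn _ (fun s hs => ?_) u u.2
    rw [exp_neg_mul_norm_ofWeighted_sub σ hT f₁ f₂ hs]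
    exact ContinuousMap.dist_apply_le_dist _
  refine ⟨ofWeighted σ hT hΦ.fixedPoint, (hcont' _).continuousOn, fun t ht => ?_,
    fun ψ hψ hψfix => ?_⟩
  · conv_lhs => rw [← hΦ.fixedPoint_isFixedPt]
    exact ofWeighted_toWeighted σ hT _ ht
  · have hψΦ : Φ (toWeighted σ hψ) = toWeighted σ hψ := toWeighted_congr σ _ _ fun t ht =>
      (hcongr _ _ (ofWeighted_toWeighted σ hT hψ) ht).trans (hψfix t ht).symm
    rw [← hΦ.fixedPoint_unique hψΦ]
    exact ofWeighted_toWeighted σ hT hψ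

end Weighted

theorem truncated_lyapunov_perron_contraction_and_fixed_point_general
    {X Y : Type*} [NormedAddCommGroup X] [NormedSpace ℝ X] [CompleteSpace X]
    [NormedAddCommGroup Y] [NormedSpace ℝ Y] [CompleteSpace Y]
    (ΛA : ℝ → ℝ → X →L[ℝ] X) (ΛB : ℝ → ℝ → Y →L[ℝ] Y)
    (F : ℝ → X × Y → X) (G : ℝ → X × Y → Y)
    (K L α β σ t₀ T : ℝ) (x₀ : X)
    (hK : 1 ≤ K) (hL : 0 < L) (hT : t₀ < T)
    (hΛA : ∀ t s, s ≤ t → ‖ΛA t s‖ ≤ K * Real.exp (α * (t - s)))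
    (hΛB : ∀ t s, t ≤ s → ‖ΛB t s‖ ≤ K * Real.exp (β * (t - s)))
    (hΛAc : Continuous fun p : ℝ × ℝ => ΛA p.1 p.2)
    (hΛBc : Continuous fun p : ℝ × ℝ => ΛB p.1 p.2)
    (hFc : Continuous fun p : ℝ × (X × Y) => F p.1 p.2)
    (hGc : Continuous fun p : ℝ × (X × Y) => G p.1 p.2)
    (hLip : ∀ t z₁ z₂, max ‖F t z₁ - F t z₂‖ ‖G t z₁ - G t z₂‖ ≤ L * ‖z₁ - z₂‖)
    (hσ1 : α + K * L < σ) (hσ2 : σ < β - K * L) :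
    (∀ φ₁ φ₂ : ℝ → X × Y,
      ContinuousOn φ₁ (Set.Icc t₀ T) → ContinuousOn φ₂ (Set.Icc t₀ T) →
      ∀ t ∈ Set.Icc t₀ T,
        Real.exp (-σ * (t - t₀)) *
            ‖((ΛA t t₀ x₀ + ∫ s in t₀..t, ΛA t s (F s (φ₁ s)),
                -∫ s in t..T, ΛB t s (G s (φ₁ s))) : X × Y) -
              (ΛA t t₀ x₀ + ∫ s in t₀..t, ΛA t s (F s (φ₂ s)),
                -∫ s in t..T, ΛB t s (G s (φ₂ s)))‖
          ≤ max (K * L / (σ - α)) (K * L / (β - σ)) *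
              sSup ((fun s => Real.exp (-σ * (s - t₀)) * ‖φ₁ s - φ₂ s‖) '' Set.Icc t₀ T)) ∧
    ∃ φT : ℝ → X × Y, ContinuousOn φT (Set.Icc t₀ T) ∧
      (∀ t ∈ Set.Icc t₀ T,
        φT t = (ΛA t t₀ x₀ + ∫ s in t₀..t, ΛA t s (F s (φT s)),
                 -∫ s in t..T, ΛB t s (G s (φT s)))) ∧
      ∀ ψ : ℝ → X × Y, ContinuousOn ψ (Set.Icc t₀ T) →
        (∀ t ∈ Set.Icc t₀ T,
          ψ t = (ΛA t t₀ x₀ + ∫ s in t₀..t, ΛA t s (F s (ψ s)),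
                  -∫ s in t..T, ΛB t s (G s (ψ s)))) →
        Set.EqOn φT ψ (Set.Icc t₀ T) := by
  have hKL : 0 < K * L := mul_pos (zero_lt_one.trans_le hK) hL
  have hασ : α < σ := by linarith
  have hσβ : σ < β := by linarith
  have hq0 : 0 ≤ max (K * L / (σ - α)) (K * L / (β - σ)) :=
    le_max_of_le_left (div_nonneg hKL.le (sub_pos.2 hασ).le)
  have hq1 : max (K * L / (σ - α)) (K * L / (β - σ)) < 1 :=
    max_lt ((div_lt_one (sub_pos.2 hασ)).2 (by linarith))
      ((div_lt_one (sub_pos.2 hσβ)).2 (by linarith))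
  have hcontr := lyapunovPerronMap_weighted_norm_sub_le (t₀ := t₀) (T := T) (x₀ := x₀)
    hΛA hΛB hΛAc hΛBc hFc hGc hL.le (fun t z₁ z₂ => (le_max_left _ _).trans (hLip t z₁ z₂))
    (fun t z₁ z₂ => (le_max_right _ _).trans (hLip t z₁ z₂)) hασ hσβ
  refine ⟨fun φ₁ φ₂ h₁ h₂ t ht => hcontr φ₁ φ₂ h₁ h₂ _ (fun s hs => ?_) t ht,
    exists_fixedPoint_of_weighted_contraction σ hT.le (𝒯 := lyapunovPerronMap ΛA ΛB F G t₀ T x₀)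
      (fun _ => continuous_lyapunovPerronMap hΛAc hΛBc hFc hGc)
      (fun _ _ => lyapunovPerronMap_congr) hq0 hq1 hcontr⟩
  exact le_csSup (isCompact_Icc.bddAbove_image (by fun_prop)) (mem_image_of_mem _ hs)

theorem truncated_lyapunov_perron_contraction_and_fixed_point
    {X Y : Type*} [NormedAddCommGroup X] [NormedSpace ℝ X] [CompleteSpace X]
    [NormedAddCommGroup Y] [NormedSpace ℝ Y] [CompleteSpace Y]
    (ΛA : ℝ → ℝ → X →L[ℝ] X) (ΛB : ℝ → ℝ → Y →L[ℝ] Y)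
    (F : ℝ → X × Y → X) (G : ℝ → X × Y → Y)
    (K L α β σ t₀ T : ℝ) (x₀ : X)
    (hK : 1 ≤ K) (hL : 0 < L) (hαβ : α < β) (hT : t₀ < T)
    (hΛA : ∀ t s, s ≤ t → ‖ΛA t s‖ ≤ K * Real.exp (α * (t - s)))
    (hΛB : ∀ t s, t ≤ s → ‖ΛB t s‖ ≤ K * Real.exp (β * (t - s)))
    (hΛAc : Continuous fun p : ℝ × ℝ => ΛA p.1 p.2)
    (hΛBc : Continuous fun p : ℝ × ℝ => ΛB p.1 p.2)
    (hFc : Continuous fun p : ℝ × (X × Y) => F p.1 p.2)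
    (hGc : Continuous fun p : ℝ × (X × Y) => G p.1 p.2)
    (hF0 : ∀ t, F t 0 = 0) (hG0 : ∀ t, G t 0 = 0)
    (hLip : ∀ t z₁ z₂, max ‖F t z₁ - F t z₂‖ ‖G t z₁ - G t z₂‖ ≤ L * ‖z₁ - z₂‖)
    (hgap : L < (β - α) / (2 * K))
    (hσ1 : α + K * L < σ) (hσ2 : σ < β - K * L) :
    (∀ φ₁ φ₂ : ℝ → X × Y,
      ContinuousOn φ₁ (Set.Icc t₀ T) → ContinuousOn φ₂ (Set.Icc t₀ T) →
      ∀ t ∈ Set.Icc t₀ T,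
        Real.exp (-σ * (t - t₀)) *
            ‖((ΛA t t₀ x₀ + ∫ s in t₀..t, ΛA t s (F s (φ₁ s)),
                -∫ s in t..T, ΛB t s (G s (φ₁ s))) : X × Y) -
              (ΛA t t₀ x₀ + ∫ s in t₀..t, ΛA t s (F s (φ₂ s)),
                -∫ s in t..T, ΛB t s (G s (φ₂ s)))‖
          ≤ max (K * L / (σ - α)) (K * L / (β - σ)) *
              sSup ((fun s => Real.exp (-σ * (s - t₀)) * ‖φ₁ s - φ₂ s‖) '' Set.Icc t₀ T)) ∧
    ∃ φT : ℝ → X × Y, ContinuousOn φT (Set.Icc t₀ T) ∧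
      (∀ t ∈ Set.Icc t₀ T,
        φT t = (ΛA t t₀ x₀ + ∫ s in t₀..t, ΛA t s (F s (φT s)),
                 -∫ s in t..T, ΛB t s (G s (φT s)))) ∧
      ∀ ψ : ℝ → X × Y, ContinuousOn ψ (Set.Icc t₀ T) →
        (∀ t ∈ Set.Icc t₀ T,
          ψ t = (ΛA t t₀ x₀ + ∫ s in t₀..t, ΛA t s (F s (ψ s)),
                  -∫ s in t..T, ΛB t s (G s (ψ s)))) →
        Set.EqOn φT ψ (Set.Icc t₀ T) :=
  truncated_lyapunov_perron_contraction_and_fixed_point_general ΛA ΛB F G K L α β σ t₀ T x₀ hK hL hT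
    hΛA hΛB hΛAc hΛBc hFc hGc hLip hσ1 hσ2
end
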